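/- arXiv:2605.23849 — 2 statements merged into one kernel-verified Lean document; each statement's English description precedes it below -/
import Mathlib

section
/- Let n > 2 be an integer with n ≡ 2 (mod 3) and let σ₁, σ₂, σ₃ be derangements of {1,…,n}. Then φ(σ₁)·φ(σ₂)·φ(σ₃) ∈ C_n. -/
/-!
Work in the quotient `G_n / C_n`, where every triangle `p_{ij} + p_{jk} + p_{ik}` vanishes.
For `n ≥ 5` any two edges sharing a vertex `a` can be compared through two further vertices
`d, e`, which gives `2 p_{ab} = 2 p_{ac}`; hence `t = 2 p_{ab}` does not depend on the edge, and a
doubled triangle gives `3 t = 0`. Trading every edge `{i, σ i}` of a derangement for the two other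
sides of the triangle through a fixed vertex `z` gives `φ(σ) = (3 - n) t`, so the sum of three
such classes is `(3 - n) · 3t = 0`.
-/

attribute [local instance] Classical.propDecidable

/-- `G_n` is realized additively as the group of `ℤ`-valued functions on unordered
pairs from `{1,…,n}`; `pgen n i j` is the generator `p_{i,j} = p_{j,i}`. -/
noncomputable def pgen (n : ℕ) (i j : Fin n) : Sym2 (Fin n) → ℤ :=
  Pi.single s(i, j) 1

/-- `φ(σ) = ∏_i p_{i,σ(i)}` (written additively). -/
noncomputable def phi (n : ℕ) (σ : Equiv.Perm (Fin n)) : Sym2 (Fin n) → ℤ :=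
  ∑ i : Fin n, pgen n i (σ i)

/-- The subgroup `C_n ≤ G_n` generated by the elements
`c_{i,j,k} = p_{i,j}·p_{j,k}·p_{i,k}` for pairwise distinct `i,j,k`. -/
noncomputable def Cgrp (n : ℕ) : AddSubgroup (Sym2 (Fin n) → ℤ) :=
  AddSubgroup.closure {x | ∃ i j k : Fin n, i ≠ j ∧ j ≠ k ∧ i ≠ k ∧
    x = pgen n i j + pgen n j k + pgen n i k}

lemma exists_two_ne_of_five_le_card {α : Type*} [Fintype α] [DecidableEq α]
    (hα : 5 ≤ Fintype.card α) (a b c : α) :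
    ∃ d e : α, d ≠ e ∧ d ≠ a ∧ d ≠ b ∧ d ≠ c ∧ e ≠ a ∧ e ≠ b ∧ e ≠ c := by
  have hcard : 1 < ({a, b, c}ᶜ : Finset α).card := by
    have : ({a, b, c} : Finset α).card ≤ 3 := Finset.card_le_three
    rw [Finset.card_compl]
    omega
  obtain ⟨d, hd, e, he, hde⟩ := Finset.one_lt_card.mp hcard
  simp only [Finset.mem_compl, Finset.mem_insert, Finset.mem_singleton, not_or] at hd he
  exact ⟨d, e, hde, hd.1, hd.2.1, hd.2.2, he.1, he.2.1, he.2.2⟩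

open QuotientAddGroup

noncomputable def edgeClass (n : ℕ) (i j : Fin n) : (Sym2 (Fin n) → ℤ) ⧸ Cgrp n :=
  pgen n i j

section

variable {n : ℕ}

lemma edgeClass_comm (i j : Fin n) : edgeClass n i j = edgeClass n j i := by
  rw [edgeClass, edgeClass, pgen, pgen, Sym2.eq_swap]

lemma edgeClass_add_add_eq_zero {i j k : Fin n} (hij : i ≠ j) (hjk : j ≠ k) (hik : i ≠ k) :
    edgeClass n i j + edgeClass n j k + edgeClass n i k = 0 :=
  (eq_zero_iff _).mpr (AddSubgroup.subset_closure ⟨i, j, k, hij, hjk, hik, rfl⟩)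

lemma two_smul_edgeClass_eq_of_left (hn : 5 ≤ n) {a b c : Fin n} (hab : a ≠ b) (hac : a ≠ c) :
    2 • edgeClass n a b = 2 • edgeClass n a c := by
  obtain rfl | hbc := eq_or_ne b c
  · rfl
  obtain ⟨d, e, hde, hda, hdb, hdc, hea, heb, hec⟩ := exists_two_ne_of_five_le_card (by simpa) a b c
  linear_combination (norm := module)
    edgeClass_add_add_eq_zero hab hdb.symm hda.symm
    - edgeClass_add_add_eq_zero hac hdc.symm hda.symm
    + edgeClass_add_add_eq_zero hab heb.symm hea.symm
    - edgeClass_add_add_eq_zero hac hec.symm hea.symm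
    - edgeClass_add_add_eq_zero hdb.symm hde heb.symm
    + edgeClass_add_add_eq_zero hdc.symm hde hec.symm

lemma two_smul_edgeClass_eq (hn : 5 ≤ n) {a b c d : Fin n} (hab : a ≠ b) (hcd : c ≠ d) :
    2 • edgeClass n a b = 2 • edgeClass n c d := by
  obtain rfl | hac := eq_or_ne a c
  · exact two_smul_edgeClass_eq_of_left hn hab hcd
  calc 2 • edgeClass n a b = 2 • edgeClass n a c := two_smul_edgeClass_eq_of_left hn hab hac
    _ = 2 • edgeClass n c a := by rw [edgeClass_comm]
    _ = 2 • edgeClass n c d := two_smul_edgeClass_eq_of_left hn hac.symm hcd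

lemma six_smul_edgeClass_eq_zero (hn : 5 ≤ n) {a b : Fin n} (hab : a ≠ b) :
    6 • edgeClass n a b = 0 := by
  obtain ⟨c, -, -, hca, hcb, -⟩ := exists_two_ne_of_five_le_card (by simpa) a b b
  linear_combination (norm := module)
    2 • edgeClass_add_add_eq_zero hab hcb.symm hca.symm
    - two_smul_edgeClass_eq hn hcb.symm hab
    - two_smul_edgeClass_eq hn hca.symm hab

lemma coe_phi (σ : Equiv.Perm (Fin n)) :
    (phi n σ : (Sym2 (Fin n) → ℤ) ⧸ Cgrp n) = ∑ i, edgeClass n i (σ i) :=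
  mk_sum _ _

-- Each edge `{i, σ i}` is traded for the other two sides of its triangle through `z`.
lemma coe_phi_eq_star {σ : Equiv.Perm (Fin n)} (hσ : ∀ i, σ i ≠ i) (z : Fin n) :
    (phi n σ : (Sym2 (Fin n) → ℤ) ⧸ Cgrp n) =
      2 • edgeClass n z (σ z) + 2 • edgeClass n z (σ⁻¹ z)
        - 2 • ∑ i ∈ Finset.univ.erase z, edgeClass n z i := by
  set T : Fin n → (Sym2 (Fin n) → ℤ) ⧸ Cgrp n :=
    fun i ↦ edgeClass n z i + edgeClass n i (σ i) + edgeClass n z (σ i)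
  have hz : z ≠ σ⁻¹ z := fun h ↦ hσ z (Equiv.Perm.eq_inv_iff_eq.mp h)
  have h_sum_T : ∑ i, T i = T z + T (σ⁻¹ z) := by
    refine Fintype.sum_eq_add _ _ hz fun i ⟨hiz, hi⟩ ↦ ?_
    have hσi : z ≠ σ i := fun h ↦ hi (Equiv.Perm.eq_inv_iff_eq.mpr h.symm)
    exact edgeClass_add_add_eq_zero hiz.symm (hσ i).symm hσi
  have h_sum_comp : ∑ i, edgeClass n z (σ i) = ∑ i, edgeClass n z i := Equiv.sum_comp σ _
  have h_sum_erase := Finset.add_sum_erase Finset.univ (edgeClass n z) (Finset.mem_univ z)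
  simp only [T, Finset.sum_add_distrib, Equiv.Perm.coe_inv, Equiv.apply_symm_apply,
    h_sum_comp] at h_sum_T
  rw [edgeClass_comm (σ.symm z) z] at h_sum_T
  rw [coe_phi, Equiv.Perm.coe_inv]
  linear_combination (norm := module) h_sum_T + 2 • h_sum_erase

lemma coe_phi_eq_smul (hn : 5 ≤ n) {σ : Equiv.Perm (Fin n)} (hσ : ∀ i, σ i ≠ i) {z w : Fin n}
    (hzw : z ≠ w) :
    (phi n σ : (Sym2 (Fin n) → ℤ) ⧸ Cgrp n) = ((3 : ℤ) - n) • (2 • edgeClass n z w) := by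
  have h_star_sum : 2 • ∑ i ∈ Finset.univ.erase z, edgeClass n z i
      = ((n : ℤ) - 1) • (2 • edgeClass n z w) := by
    rw [← Finset.sum_nsmul, Finset.sum_congr rfl fun i hi ↦
      two_smul_edgeClass_eq hn (Finset.ne_of_mem_erase hi).symm hzw, Finset.sum_const,
      Finset.card_erase_of_mem (Finset.mem_univ z), Finset.card_univ, Fintype.card_fin,
      ← natCast_zsmul, Nat.cast_sub (by omega), Nat.cast_one]
  have hσz : σ⁻¹ z ≠ z := fun h ↦ hσ z (Equiv.Perm.eq_inv_iff_eq.mp h.symm)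
  rw [coe_phi_eq_star hσ z, h_star_sum, two_smul_edgeClass_eq hn (hσ z).symm hzw,
    two_smul_edgeClass_eq hn hσz.symm hzw]
  module

end

/-- For `n > 2` with `n ≡ 2 (mod 3)` and derangements `σ₁, σ₂, σ₃` of `{1,…,n}`,
`φ(σ₁)·φ(σ₂)·φ(σ₃) ∈ C_n` (written additively). -/
theorem stmt_16 (n : ℕ) (h2 : 2 < n) (hmod : n % 3 = 2)
    (σ₁ σ₂ σ₃ : Equiv.Perm (Fin n))
    (h₁ : ∀ i, σ₁ i ≠ i) (h₂ : ∀ i, σ₂ i ≠ i) (h₃ : ∀ i, σ₃ i ≠ i) :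
    phi n σ₁ + phi n σ₂ + phi n σ₃ ∈ Cgrp n := by
  have hn : 5 ≤ n := by omega
  have hzw : (⟨0, by omega⟩ : Fin n) ≠ ⟨1, by omega⟩ := by simp
  rw [← eq_zero_iff, mk_add, mk_add, coe_phi_eq_smul hn h₁ hzw, coe_phi_eq_smul hn h₂ hzw,
    coe_phi_eq_smul hn h₃ hzw]
  linear_combination (norm := module) ((3 : ℤ) - n) • six_smul_edgeClass_eq_zero hn hzw
end

section
/- Let n > 4 be an integer with n ≡ 1 (mod 3) and let σ₁, σ₂, σ₃ be derangements of {1,…,n}. Then φ(σ₁)·φ(σ₂)·φ(σ₃) ∈ C_n. -/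
attribute [local instance] Classical.propDecidable

lemma pgen_comm (n : ℕ) (i j : Fin n) : pgen n i j = pgen n j i := by
  unfold pgen; rw [Sym2.eq_swap]

lemma gen_mem (n : ℕ) (i j k : Fin n) (hij : i ≠ j) (hjk : j ≠ k) (hik : i ≠ k) :
    pgen n i j + pgen n j k + pgen n i k ∈ Cgrp n :=
  AddSubgroup.subset_closure ⟨i, j, k, hij, hjk, hik, rfl⟩

lemma exists_two (n : ℕ) (h4 : 4 < n) (s : Finset (Fin n)) (hs : s.card ≤ 3) :
    ∃ x y : Fin n, x ≠ y ∧ x ∉ s ∧ y ∉ s := by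
  have hc : 1 < sᶜ.card := by
    rw [Finset.card_compl]
    simp only [Fintype.card_fin]
    omega
  obtain ⟨x, hx, y, hy, hxy⟩ := Finset.one_lt_card.mp hc
  exact ⟨x, y, hxy, Finset.mem_compl.mp hx, Finset.mem_compl.mp hy⟩

lemma two_sub_disjoint (n : ℕ) (a b c d : Fin n) (hab : a ≠ b) (hcd : c ≠ d)
    (hac : a ≠ c) (had : a ≠ d) (hbc : b ≠ c) (hbd : b ≠ d) :
    2 • pgen n a b - 2 • pgen n c d ∈ Cgrp n := by
  have g1 := gen_mem n a b c hab hbc hac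
  have g2 := gen_mem n b c d hbc hcd hbd
  have g3 := gen_mem n a b d hab hbd had
  have g4 := gen_mem n a c d hac hcd had
  have key : 2 • pgen n a b - 2 • pgen n c d =
      ((pgen n a b + pgen n b c + pgen n a c) - (pgen n b c + pgen n c d + pgen n b d)) +
      ((pgen n a b + pgen n b d + pgen n a d) - (pgen n a c + pgen n c d + pgen n a d)) := by
    abel
  rw [key]
  exact add_mem (sub_mem g1 g2) (sub_mem g3 g4)

lemma two_sub_share (n : ℕ) (h4 : 4 < n) (a b d : Fin n)
    (hab : a ≠ b) (had : a ≠ d) (hbd : b ≠ d) :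
    2 • pgen n a b - 2 • pgen n a d ∈ Cgrp n := by
  have h3 : ({a, b, d} : Finset (Fin n)).card ≤ 3 := by
    have h1 := Finset.card_insert_le a ({b, d} : Finset (Fin n))
    have h2 := Finset.card_insert_le b ({d} : Finset (Fin n))
    simp only [Finset.card_singleton] at h2
    omega
  obtain ⟨x, y, hxy, hx, hy⟩ := exists_two n h4 _ h3
  simp only [Finset.mem_insert, Finset.mem_singleton, not_or] at hx hy
  obtain ⟨hxa, hxb, hxd⟩ := hx
  obtain ⟨hya, hyb, hyd⟩ := hy
  have g1 := gen_mem n a b x hab (Ne.symm hxb) (Ne.symm hxa)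
  have g2 := gen_mem n a d x had (Ne.symm hxd) (Ne.symm hxa)
  have g3 := gen_mem n a b y hab (Ne.symm hyb) (Ne.symm hya)
  have g4 := gen_mem n a d y had (Ne.symm hyd) (Ne.symm hya)
  have g5 := gen_mem n b x y (Ne.symm hxb) hxy (Ne.symm hyb)
  have g6 := gen_mem n d x y (Ne.symm hxd) hxy (Ne.symm hyd)
  have key : 2 • pgen n a b - 2 • pgen n a d =
      ((pgen n a b + pgen n b x + pgen n a x) - (pgen n a d + pgen n d x + pgen n a x)) +
      ((pgen n a b + pgen n b y + pgen n a y) - (pgen n a d + pgen n d y + pgen n a y)) -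
      ((pgen n b x + pgen n x y + pgen n b y) - (pgen n d x + pgen n x y + pgen n d y)) := by
    abel
  rw [key]
  exact sub_mem (add_mem (sub_mem g1 g2) (sub_mem g3 g4)) (sub_mem g5 g6)

lemma two_sub (n : ℕ) (h4 : 4 < n) (a b c d : Fin n) (hab : a ≠ b) (hcd : c ≠ d) :
    2 • pgen n a b - 2 • pgen n c d ∈ Cgrp n := by
  obtain h | hac := eq_or_ne a c
  · subst h
    obtain h | hbd := eq_or_ne b d
    · subst h
      simpa using zero_mem (Cgrp n)
    · exact two_sub_share n h4 a b d hab hcd hbd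
  · obtain h | had := eq_or_ne a d
    · subst h
      obtain h | hbc := eq_or_ne b c
      · subst h
        rw [pgen_comm n b a]
        simpa using zero_mem (Cgrp n)
      · rw [pgen_comm n c a]
        exact two_sub_share n h4 a b c hab hac hbc
    · obtain h | hbc := eq_or_ne b c
      · subst h
        rw [pgen_comm n a b]
        exact two_sub_share n h4 b a d (Ne.symm hab) hcd had
      · obtain h | hbd := eq_or_ne b d
        · subst h
          rw [pgen_comm n a b, pgen_comm n c b]
          exact two_sub_share n h4 b a c (Ne.symm hab) (Ne.symm hcd) hac
        · exact two_sub_disjoint n a b c d hab hcd hac had hbc hbd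

lemma six_mem (n : ℕ) (h4 : 4 < n) (a b : Fin n) (hab : a ≠ b) :
    (6 : ℕ) • pgen n a b ∈ Cgrp n := by
  have h3 : ({a, b} : Finset (Fin n)).card ≤ 3 := by
    have h1 := Finset.card_insert_le a ({b} : Finset (Fin n))
    simp only [Finset.card_singleton] at h1
    omega
  obtain ⟨x, y, hxy, hx, hy⟩ := exists_two n h4 _ h3
  simp only [Finset.mem_insert, Finset.mem_singleton, not_or] at hx
  obtain ⟨hxa, hxb⟩ := hx
  have g := gen_mem n a b x hab (Ne.symm hxb) (Ne.symm hxa)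
  have t1 := two_sub n h4 a b b x hab (Ne.symm hxb)
  have t2 := two_sub n h4 a b a x hab (Ne.symm hxa)
  have key : (6 : ℕ) • pgen n a b =
      2 • (pgen n a b + pgen n b x + pgen n a x) +
      (2 • pgen n a b - 2 • pgen n b x) + (2 • pgen n a b - 2 • pgen n a x) := by
    abel
  rw [key]
  exact add_mem (add_mem (AddSubgroup.nsmul_mem _ g 2) t1) t2

/-- Auxiliary sum with fixed points contributing zero. -/
noncomputable def FF (n : ℕ) (σ : Equiv.Perm (Fin n)) : Sym2 (Fin n) → ℤ :=
  ∑ x : Fin n, if σ x = x then 0 else pgen n x (σ x)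

lemma key_lemma (n : ℕ) (h4 : 4 < n) (e f : Fin n) (hef : e ≠ f) :
    ∀ (m : ℕ) (σ : Equiv.Perm (Fin n)), σ.support.card ≤ m →
      FF n σ + σ.support.card • (2 • pgen n e f) ∈ Cgrp n := by
  intro m
  induction m with
  | zero =>
    intro σ hσ
    have h1 : σ = 1 := by
      rw [← Equiv.Perm.support_eq_empty_iff, ← Finset.card_eq_zero]
      omega
    subst h1
    have h2 : FF n 1 = 0 := by
      unfold FF
      simp
    rw [h2, Equiv.Perm.support_one]
    simpa using zero_mem (Cgrp n)
  | succ m ih =>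
    intro σ hσ
    by_cases h1 : σ = 1
    · subst h1
      have h2 : FF n 1 = 0 := by
        unfold FF
        simp
      rw [h2, Equiv.Perm.support_one]
      simpa using zero_mem (Cgrp n)
    · obtain ⟨i, hi⟩ : ∃ i, σ i ≠ i := by
        by_contra hcon
        push_neg at hcon
        exact h1 (Equiv.ext hcon)
      set j := σ i with hj
      have hji : j ≠ i := hi
      have hsj : σ j ≠ j := by
        intro h
        exact hji (σ.injective (h.trans hj))
      set σ' := σ * Equiv.swap i j with hσ'
      have hσ'i : σ' i = σ j := by
        rw [hσ', Equiv.Perm.mul_apply, Equiv.swap_apply_left]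
      have hσ'j : σ' j = j := by
        rw [hσ', Equiv.Perm.mul_apply, Equiv.swap_apply_right, ← hj]
      have hσ'x : ∀ x, x ≠ i → x ≠ j → σ' x = σ x := by
        intro x hxi hxj
        rw [hσ', Equiv.Perm.mul_apply, Equiv.swap_apply_of_ne_of_ne hxi hxj]
      have hdiff : FF n σ - FF n σ' =
          ((if σ i = i then 0 else pgen n i (σ i)) - (if σ' i = i then 0 else pgen n i (σ' i))) +
          ((if σ j = j then 0 else pgen n j (σ j)) - (if σ' j = j then 0 else pgen n j (σ' j))) := by
        unfold FF
        rw [← Finset.sum_sub_distrib]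
        have hsub : ∑ x : Fin n,
            ((if σ x = x then 0 else pgen n x (σ x)) - (if σ' x = x then 0 else pgen n x (σ' x)))
            = ∑ x ∈ ({i, j} : Finset (Fin n)),
            ((if σ x = x then 0 else pgen n x (σ x)) - (if σ' x = x then 0 else pgen n x (σ' x))) := by
          refine (Finset.sum_subset (Finset.subset_univ _) ?_).symm
          intro x _ hx
          simp only [Finset.mem_insert, Finset.mem_singleton, not_or] at hx
          rw [hσ'x x hx.1 hx.2, sub_self]
        rw [hsub, Finset.sum_pair (Ne.symm hji)]
      by_cases hl : σ j = i
      · -- 2-cycle case: support drops by 2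
        have hσ'i' : σ' i = i := by rw [hσ'i, hl]
        have hsupp : σ.support = insert i (insert j σ'.support) := by
          ext x
          simp only [Equiv.Perm.mem_support, Finset.mem_insert]
          constructor
          · intro hx
            by_cases hxi : x = i
            · exact Or.inl hxi
            · by_cases hxj : x = j
              · exact Or.inr (Or.inl hxj)
              · exact Or.inr (Or.inr (by rw [hσ'x x hxi hxj]; exact hx))
          · intro hx
            rcases hx with rfl | rfl | hx
            · exact hi
            · exact hsj
            · by_cases hxi : x = i
              · subst hxi; exact hi
              · by_cases hxj : x = j
                · subst hxj; exact hsj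
                · rw [← hσ'x x hxi hxj]; exact hx
        have hjn : j ∉ σ'.support := by
          simp [Equiv.Perm.mem_support, hσ'j]
        have hin : i ∉ insert j σ'.support := by
          simp only [Finset.mem_insert, not_or]
          exact ⟨hji.symm, by simp [Equiv.Perm.mem_support, hσ'i']⟩
        have hcard : σ.support.card = σ'.support.card + 2 := by
          rw [hsupp, Finset.card_insert_of_notMem hin, Finset.card_insert_of_notMem hjn]
        have hIH := ih σ' (by omega)
        have hd2 : FF n σ - FF n σ' = pgen n i j + pgen n i j := by
          rw [hdiff, if_neg (by rw [← hj]; exact hi), if_pos hσ'i', if_neg hsj, if_pos hσ'j,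
            ← hj, hl, pgen_comm n j i]
          abel
        have hF : FF n σ = FF n σ' + (pgen n i j + pgen n i j) := by
          rw [← hd2]; abel
        have hmem2 : (pgen n i j + pgen n i j) +
            (2 • pgen n e f + 2 • pgen n e f) ∈ Cgrp n := by
          have e2 : (pgen n i j + pgen n i j) + (2 • pgen n e f + 2 • pgen n e f) =
              (2 • pgen n i j - 2 • pgen n e f) + (6 : ℕ) • pgen n e f := by
            abel
          rw [e2]
          exact add_mem (two_sub n h4 i j e f hji.symm hef) (six_mem n h4 e f hef)
        have hgoal : FF n σ + σ.support.card • (2 • pgen n e f) =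
            (FF n σ' + σ'.support.card • (2 • pgen n e f)) +
            ((pgen n i j + pgen n i j) + (2 • pgen n e f + 2 • pgen n e f)) := by
          rw [hF, hcard, add_nsmul]
          abel
        rw [hgoal]
        exact add_mem hIH hmem2
      · -- support drops by 1
        set l := σ j with hldef
        have hlj : l ≠ j := hsj
        have hli : l ≠ i := hl
        have hσ'il : σ' i = l := hσ'i
        have hsupp : σ.support = insert j σ'.support := by
          ext x
          simp only [Equiv.Perm.mem_support, Finset.mem_insert]
          constructor
          · intro hx
            by_cases hxj : x = j
            · exact Or.inl hxj
            · right
              by_cases hxi : x = i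
              · subst hxi; rw [hσ'il]; exact hli
              · rw [hσ'x x hxi hxj]; exact hx
          · intro hx
            rcases hx with rfl | hx
            · exact hsj
            · by_cases hxi : x = i
              · subst hxi; exact hi
              · by_cases hxj : x = j
                · subst hxj; exact hsj
                · rw [← hσ'x x hxi hxj]; exact hx
        have hjn : j ∉ σ'.support := by
          simp [Equiv.Perm.mem_support, hσ'j]
        have hcard : σ.support.card = σ'.support.card + 1 := by
          rw [hsupp, Finset.card_insert_of_notMem hjn]
        have hIH := ih σ' (by omega)
        have hd2 : FF n σ - FF n σ' = pgen n i j + pgen n j l - pgen n i l := by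
          rw [hdiff, if_neg (by rw [← hj]; exact hi), if_neg (by rw [hσ'il]; exact hli),
            if_neg hsj, if_pos hσ'j, ← hj, hσ'il]
          abel
        have hF : FF n σ = FF n σ' + (pgen n i j + pgen n j l - pgen n i l) := by
          rw [← hd2]; abel
        have hmem2 : (pgen n i j + pgen n j l - pgen n i l) + 2 • pgen n e f ∈ Cgrp n := by
          have e2 : (pgen n i j + pgen n j l - pgen n i l) + 2 • pgen n e f =
              (pgen n i j + pgen n j l + pgen n i l) -
              (2 • pgen n i l - 2 • pgen n e f) := by
            abel
          rw [e2]
          exact sub_mem (gen_mem n i j l hji.symm hlj.symm hli.symm)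
            (two_sub n h4 i l e f hli.symm hef)
        have hgoal : FF n σ + σ.support.card • (2 • pgen n e f) =
            (FF n σ' + σ'.support.card • (2 • pgen n e f)) +
            ((pgen n i j + pgen n j l - pgen n i l) + 2 • pgen n e f) := by
          rw [hF, hcard, add_nsmul, one_nsmul]
          abel
        rw [hgoal]
        exact add_mem hIH hmem2

lemma phi_eq_FF (n : ℕ) (σ : Equiv.Perm (Fin n)) (h : ∀ i, σ i ≠ i) :
    phi n σ = FF n σ := by
  unfold phi FF
  refine Finset.sum_congr rfl fun x _ => ?_
  rw [if_neg (h x)]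

lemma support_card_eq (n : ℕ) (σ : Equiv.Perm (Fin n)) (h : ∀ i, σ i ≠ i) :
    σ.support.card = n := by
  have : σ.support = Finset.univ := by
    ext x
    simp [Equiv.Perm.mem_support, h x]
  rw [this, Finset.card_univ, Fintype.card_fin]

/-- For `n > 4` with `n ≡ 1 (mod 3)` and derangements `σ₁, σ₂, σ₃` of `{1,…,n}`,
`φ(σ₁)·φ(σ₂)·φ(σ₃) ∈ C_n` (written additively). -/
theorem stmt_17 (n : ℕ) (h4 : 4 < n) (hmod : n % 3 = 1)
    (σ₁ σ₂ σ₃ : Equiv.Perm (Fin n))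
    (h₁ : ∀ i, σ₁ i ≠ i) (h₂ : ∀ i, σ₂ i ≠ i) (h₃ : ∀ i, σ₃ i ≠ i) :
    phi n σ₁ + phi n σ₂ + phi n σ₃ ∈ Cgrp n := by
  have hn2 : 1 < n := by omega
  set e : Fin n := ⟨0, by omega⟩
  set f : Fin n := ⟨1, by omega⟩
  have hef : e ≠ f := by
    intro h
    simpa [e, f, Fin.ext_iff] using h
  have hk1 := key_lemma n h4 e f hef σ₁.support.card σ₁ le_rfl
  have hk2 := key_lemma n h4 e f hef σ₂.support.card σ₂ le_rfl
  have hk3 := key_lemma n h4 e f hef σ₃.support.card σ₃ le_rfl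
  rw [support_card_eq n σ₁ h₁] at hk1
  rw [support_card_eq n σ₂ h₂] at hk2
  rw [support_card_eq n σ₃ h₃] at hk3
  have h6 := six_mem n h4 e f hef
  have h6n : n • ((6 : ℕ) • pgen n e f) ∈ Cgrp n := AddSubgroup.nsmul_mem _ h6 n
  have hgoal : phi n σ₁ + phi n σ₂ + phi n σ₃ =
      ((FF n σ₁ + n • (2 • pgen n e f)) + (FF n σ₂ + n • (2 • pgen n e f)) +
        (FF n σ₃ + n • (2 • pgen n e f))) - n • ((6 : ℕ) • pgen n e f) := by
    rw [phi_eq_FF n σ₁ h₁, phi_eq_FF n σ₂ h₂, phi_eq_FF n σ₃ h₃]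
    have h63 : (6 : ℕ) • pgen n e f = 2 • pgen n e f + 2 • pgen n e f + 2 • pgen n e f := by
      abel
    rw [h63, smul_add, smul_add]
    abel
  rw [hgoal]
  exact sub_mem (add_mem (add_mem hk1 hk2) hk3) h6n
end
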